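/- arXiv:1006.4658 — 6 statements merged into one kernel-verified Lean document; each statement's English description precedes it below -/
import Mathlib

section
/- Let A be a Bott matrix in 𝔅(n). Then the involutions a_1,…,a_n of T^n associated with A commute pairwise, and the group G(A) they generate acts freely on T^n; concretely, for every nonempty subset S ⊆ {1,…,n} and every z ∈ T^n one has (∏_{i∈S} a_i)(z) ≠ z. -/
open Matrix

/-- A Bott matrix: conjugate by a permutation matrix to a strictly upper
triangular binary matrix. -/
def IsBott {n : ℕ} (A : Matrix (Fin n) (Fin n) (ZMod 2)) : Prop :=
  ∃ (σ : Equiv.Perm (Fin n)) (B : Matrix (Fin n) (Fin n) (ZMod 2)),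
    (∀ i j : Fin n, j ≤ i → B i j = 0) ∧
    A = σ.permMatrix (ZMod 2) * B * (σ⁻¹).permMatrix (ZMod 2)

/-- `z(a)`: `z` if `a = 0` and the complex conjugate `z̄` if `a = 1`. -/
noncomputable def conjPow (a : ZMod 2) (z : ℂ) : ℂ :=
  if a = 0 then z else (starRingEnd ℂ) z

/-- The involution `a_i` of `T^n ⊆ ℂ^n` associated with a binary matrix `A`:
`a_i(z)_j = z_j(A^i_j)` for `j ≠ i` and `a_i(z)_i = -z_i`. -/
noncomputable def aMap {n : ℕ} (A : Matrix (Fin n) (Fin n) (ZMod 2)) (i : Fin n)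
    (z : Fin n → ℂ) : Fin n → ℂ :=
  fun j => if j = i then -z i else conjPow (A i j) (z j)

/-- The composition `∏_{i ∈ S} a_i` (taken in increasing order of indices). -/
noncomputable def prodMap {n : ℕ} (A : Matrix (Fin n) (Fin n) (ZMod 2))
    (S : Finset (Fin n)) : (Fin n → ℂ) → (Fin n → ℂ) :=
  (S.sort (· ≤ ·)).foldr (fun i f => aMap A i ∘ f) id

/-!
The group `G(A)` acts coordinatewise by negations and conjugations, which commute with each
other whatever `A` is. For freeness, relabel so that `A` is strictly upper triangular and pick
the `i ∈ S` that comes first: column `i` of `A` vanishes on the rows in `S`, so `∏_{j ∈ S} a_j`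
acts on the `i`-th coordinate by a single negation, and `-z_i ≠ z_i` on the unit circle.
-/

@[simp]
lemma conjPow_zero (z : ℂ) : conjPow 0 z = z := by
  simp [conjPow]

lemma conjPow_neg (a : ZMod 2) (z : ℂ) : conjPow a (-z) = -conjPow a z := by
  unfold conjPow; split_ifs <;> simp

lemma conjPow_comm (a b : ZMod 2) (z : ℂ) :
    conjPow a (conjPow b z) = conjPow b (conjPow a z) := by
  unfold conjPow; split_ifs <;> rfl

theorem IsBott.exists_perm {n : ℕ} {A : Matrix (Fin n) (Fin n) (ZMod 2)} (hA : IsBott A) :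
    ∃ σ : Equiv.Perm (Fin n), ∀ i j, σ j ≤ σ i → A i j = 0 := by
  obtain ⟨σ, B, hB, rfl⟩ := hA
  refine ⟨σ, fun i j hji => ?_⟩
  simpa [Equiv.Perm.permMatrix, PEquiv.toMatrix_toPEquiv_mul, PEquiv.mul_toMatrix_toPEquiv,
    Equiv.Perm.inv_def] using hB _ _ hji

section

variable {n : ℕ} (A : Matrix (Fin n) (Fin n) (ZMod 2))

theorem aMap_comp_comm (i j : Fin n) : aMap A i ∘ aMap A j = aMap A j ∘ aMap A i := by
  funext z k
  simp only [Function.comp_apply, aMap]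
  by_cases hki : k = i <;> by_cases hkj : k = j
  · subst hki hkj; rfl
  · subst hki; simp [hkj, conjPow_neg]
  · subst hkj; simp [hki, conjPow_neg]
  · simp only [hki, hkj, if_false, conjPow_comm]

theorem foldr_aMap_apply_of_col_eq_zero (L : List (Fin n)) (i : Fin n) (z : Fin n → ℂ)
    (hcol : ∀ j ∈ L, A j i = 0) :
    L.foldr (fun j f => aMap A j ∘ f) id z i = (-1) ^ L.count i * z i := by
  induction L with
  | nil => simp
  | cons j L ih =>
    rw [List.forall_mem_cons] at hcol
    simp only [List.foldr_cons, Function.comp_apply, aMap]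
    by_cases hij : i = j
    · subst hij
      rw [if_pos rfl, ih hcol.2, List.count_cons_self, pow_succ]
      ring
    · rw [if_neg hij, hcol.1, conjPow_zero, ih hcol.2, List.count_cons_of_ne (Ne.symm hij)]

theorem prodMap_apply_of_col_eq_zero {S : Finset (Fin n)} {i : Fin n} (hi : i ∈ S)
    (hcol : ∀ j ∈ S, A j i = 0) (z : Fin n → ℂ) : prodMap A S z i = -z i := by
  have hcount : (S.sort (· ≤ ·)).count i = 1 :=
    List.count_eq_one_of_mem (S.sort_nodup _) ((S.mem_sort _).2 hi)
  rw [prodMap, foldr_aMap_apply_of_col_eq_zero A _ i z (fun j hj => hcol j ((S.mem_sort _).1 hj)),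
    hcount, pow_one, neg_one_mul]

end

/-- For a Bott matrix `A`, the involutions `a_1, …, a_n` commute pairwise, and the
group `G(A)` they generate acts freely on the torus `T^n`: for every nonempty
`S ⊆ {1,…,n}` and every `z ∈ T^n`, `(∏_{i ∈ S} a_i)(z) ≠ z`. -/
theorem bott_involutions_commute_and_free {n : ℕ}
    (A : Matrix (Fin n) (Fin n) (ZMod 2)) (hA : IsBott A) :
    (∀ i j : Fin n, aMap A i ∘ aMap A j = aMap A j ∘ aMap A i) ∧
    (∀ S : Finset (Fin n), S.Nonempty →
      ∀ z : Fin n → ℂ, (∀ i, ‖z i‖ = 1) → prodMap A S z ≠ z) := by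
  refine ⟨aMap_comp_comm A, fun S hS z hz hfix => ?_⟩
  obtain ⟨σ, hσ⟩ := hA.exists_perm
  obtain ⟨i, hiS, hi_first⟩ := S.exists_min_image σ hS
  have hneg : -z i = z i := by
    rw [← prodMap_apply_of_col_eq_zero A hiS (fun j hj => hσ j i (hi_first j hj)), hfix]
  have hzero : z i = 0 := by linear_combination -hneg / 2
  simpa [hzero] using hz i
end

section
/- Let A be a Bott matrix in 𝔅(n). Then: (i) for every permutation matrix P, Φ_P(A) := P A P⁻¹ is a Bott matrix; (ii) for every k ∈ {1,…,n}, Φ_k(A) is a Bott matrix and Φ_k(Φ_k(A)) = A; (iii) if ℓ ≠ m and A_ℓ = A_m, then Φ^{ℓ,m}(A) is a Bott matrix, its ℓ-th and m-th columns are again equal, and Φ^{ℓ,m}(Φ^{ℓ,m}(A)) = A. -/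
/-
A binary matrix is Bott exactly when its support is acyclic, i.e. when some rank function
`r` satisfies `r i < r j` whenever `A i j ≠ 0`: sorting the indices by rank gives the
permutation that makes the matrix strictly upper triangular. Each operation then preserves
acyclicity with an explicit rank function. `Φ_P` composes `r` with the permutation; `Φ_k`
only adds entries `(i, j)` with `A i k ≠ 0 ≠ A k j`, which `r` already orders through `k`;
and `Φ^{ℓ,m}` gives row `m` the support of rows `ℓ` and `m` together, so lowering the rank
of `m` to `min (r ℓ) (r m)` works, because column `m` equals column `ℓ`.
-/

open Matrix

/-- (Op1) conjugation by a permutation matrix: `Φ_P(A) = P A P⁻¹`. -/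
def PhiP {n : ℕ} (σ : Equiv.Perm (Fin n)) (A : Matrix (Fin n) (Fin n) (ZMod 2)) :
    Matrix (Fin n) (Fin n) (ZMod 2) :=
  σ.permMatrix (ZMod 2) * A * (σ⁻¹).permMatrix (ZMod 2)

/-- (Op2) `Φ_k(A)`: add the `k`-th column to every column having `1` in the
`k`-th row, i.e. `Φ_k(A)_j = A_j + A^k_j A_k`. -/
def Phi2 {n : ℕ} (k : Fin n) (A : Matrix (Fin n) (Fin n) (ZMod 2)) :
    Matrix (Fin n) (Fin n) (ZMod 2) :=
  fun i j => A i j + A k j * A i k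

/-- (Op3) `Φ^{ℓ,m}(A)`: add the `ℓ`-th row to the `m`-th row. -/
def Phi3 {n : ℕ} (l m : Fin n) (A : Matrix (Fin n) (Fin n) (ZMod 2)) :
    Matrix (Fin n) (Fin n) (ZMod 2) :=
  fun i j => if i = m then A l j + A m j else A i j

lemma Equiv.Perm.permMatrix_mul_mul_permMatrix_inv_apply {ι R : Type*} [DecidableEq ι]
    [Fintype ι] [NonAssocSemiring R] (σ : Equiv.Perm ι) (B : Matrix ι ι R) (i j : ι) :
    (σ.permMatrix R * B * σ⁻¹.permMatrix R) i j = B (σ i) (σ j) := by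
  rw [Equiv.Perm.permMatrix, Equiv.Perm.permMatrix, PEquiv.toMatrix_toPEquiv_mul,
    PEquiv.mul_toMatrix_toPEquiv]
  rfl

lemma ne_zero_or_ne_zero_of_add_ne_zero {M : Type*} [AddZeroClass M] {a b : M}
    (h : a + b ≠ 0) : a ≠ 0 ∨ b ≠ 0 := by
  contrapose! h
  rw [h.1, h.2, add_zero]

variable {n : ℕ}

lemma isBott_of_rank {α : Type*} [LinearOrder α] (A : Matrix (Fin n) (Fin n) (ZMod 2))
    (r : Fin n → α) (hr : ∀ i j, A i j ≠ 0 → r i < r j) : IsBott A := by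
  refine ⟨(Tuple.sort r)⁻¹, A.submatrix (Tuple.sort r) (Tuple.sort r), ?_, ?_⟩
  · intro i j hji
    by_contra hij
    exact (hr _ _ hij).not_ge (Tuple.monotone_sort r hji)
  · ext i j
    rw [Equiv.Perm.permMatrix_mul_mul_permMatrix_inv_apply]
    simp

lemma IsBott.exists_rank {A : Matrix (Fin n) (Fin n) (ZMod 2)} (hA : IsBott A) :
    ∃ r : Fin n → ℕ, ∀ i j, A i j ≠ 0 → r i < r j := by
  obtain ⟨σ, B, hB, rfl⟩ := hA
  refine ⟨fun x => σ x, fun i j hij => ?_⟩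
  rw [Equiv.Perm.permMatrix_mul_mul_permMatrix_inv_apply] at hij
  by_contra hji
  exact hij (hB _ _ (not_lt.mp hji))

lemma IsBott.diag_eq_zero {A : Matrix (Fin n) (Fin n) (ZMod 2)} (hA : IsBott A) (i : Fin n) :
    A i i = 0 := by
  obtain ⟨r, hr⟩ := hA.exists_rank
  by_contra h
  exact (hr i i h).false

lemma IsBott.phiP {A : Matrix (Fin n) (Fin n) (ZMod 2)} (hA : IsBott A)
    (σ : Equiv.Perm (Fin n)) : IsBott (PhiP σ A) := by
  obtain ⟨r, hr⟩ := hA.exists_rank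
  refine isBott_of_rank _ (r ∘ σ) fun i j h => hr _ _ ?_
  rwa [PhiP, Equiv.Perm.permMatrix_mul_mul_permMatrix_inv_apply] at h

lemma IsBott.phi2 {A : Matrix (Fin n) (Fin n) (ZMod 2)} (hA : IsBott A) (k : Fin n) :
    IsBott (Phi2 k A) := by
  obtain ⟨r, hr⟩ := hA.exists_rank
  refine isBott_of_rank _ r fun i j h => ?_
  rcases ne_zero_or_ne_zero_of_add_ne_zero h with hij | hkji
  · exact hr i j hij
  · obtain ⟨hkj, hik⟩ := mul_ne_zero_iff.mp hkji
    exact (hr i k hik).trans (hr k j hkj)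

lemma phi2_phi2 {A : Matrix (Fin n) (Fin n) (ZMod 2)} {k : Fin n} (hk : A k k = 0) :
    Phi2 k (Phi2 k A) = A := by
  ext i j
  simp only [Phi2, hk, mul_zero, zero_mul, add_zero]
  rw [add_assoc, CharTwo.add_self_eq_zero, add_zero]

lemma IsBott.phi3 {A : Matrix (Fin n) (Fin n) (ZMod 2)} (hA : IsBott A) {l m : Fin n}
    (hcol : ∀ i, A i l = A i m) : IsBott (Phi3 l m A) := by
  obtain ⟨r, hr⟩ := hA.exists_rank
  refine isBott_of_rank _ (Function.update r m (min (r l) (r m))) fun i j h => ?_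
  have hrow : ∀ j, A l j + A m j ≠ 0 → min (r l) (r m) < r j := fun j hj =>
    (ne_zero_or_ne_zero_of_add_ne_zero hj).elim
      (fun h => (min_le_left _ _).trans_lt (hr l j h))
      (fun h => (min_le_right _ _).trans_lt (hr m j h))
  have hmm : A l m + A m m = 0 := by rw [← hcol l, hA.diag_eq_zero, hA.diag_eq_zero, add_zero]
  by_cases him : i = m <;> by_cases hjm : j = m <;> simp only [Phi3, him, hjm, if_true,
    if_false, Function.update_self, Function.update_of_ne, Ne, not_false_eq_true] at h ⊢
  · exact absurd hmm h
  · exact hrow j h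
  · exact lt_min (hr i l (hcol i ▸ h)) (hr i m h)
  · exact hr i j h

lemma phi3_apply_left_eq_apply_right {A : Matrix (Fin n) (Fin n) (ZMod 2)} {l m : Fin n}
    (hcol : ∀ i, A i l = A i m) (i : Fin n) : Phi3 l m A i l = Phi3 l m A i m := by
  by_cases him : i = m
  · simp only [Phi3, him, if_true, hcol l, hcol m]
  · simp only [Phi3, him, if_false, hcol i]

lemma phi3_phi3 {A : Matrix (Fin n) (Fin n) (ZMod 2)} {l m : Fin n} (hlm : l ≠ m) :
    Phi3 l m (Phi3 l m A) = A := by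
  ext i j
  by_cases him : i = m
  · simp only [Phi3, him, hlm, if_true, if_false, ← add_assoc, CharTwo.add_self_eq_zero,
      zero_add]
  · simp only [Phi3, him, if_false]

/-- The three operations preserve Bott matrices; `Φ_k` is an involution, and
`Φ^{ℓ,m}` (when the columns `A_ℓ = A_m` agree) keeps the `ℓ`-th and `m`-th
columns equal and is an involution. -/
theorem bott_operations {n : ℕ} (A : Matrix (Fin n) (Fin n) (ZMod 2))
    (hA : IsBott A) :
    (∀ σ : Equiv.Perm (Fin n), IsBott (PhiP σ A)) ∧
    (∀ k : Fin n, IsBott (Phi2 k A) ∧ Phi2 k (Phi2 k A) = A) ∧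
    (∀ l m : Fin n, l ≠ m → (∀ i, A i l = A i m) →
      IsBott (Phi3 l m A) ∧ (∀ i, Phi3 l m A i l = Phi3 l m A i m) ∧
      Phi3 l m (Phi3 l m A) = A) :=
  ⟨hA.phiP, fun k => ⟨hA.phi2 k, phi2_phi2 (hA.diag_eq_zero k)⟩,
    fun _ _ hlm hcol => ⟨hA.phi3 hcol, phi3_apply_left_eq_apply_right hcol, phi3_phi3 hlm⟩⟩
end

section
/- Let D be a digraph. For every vertex v: (D*v)*v = D, and if D is acyclic then D*v is acyclic. For distinct vertices u, v with N⁻_D(u) = N⁻_D(v): N⁻_{D▷uv}(u) = N⁻_{D▷uv}(v), (D▷uv)▷uv = D, and if D is acyclic then D▷uv is acyclic. -/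
/-!
Both involution identities are pointwise Boolean identities, once one notes that
`R v v` is false and that the slide changes no arc leaving `u`.

For acyclicity, map each vertex to the set of its `R`-ancestors: a relation along which some map
into a preorder strictly increases has no cycle. When `R` is acyclic this map strictly increases
along every path of `R`, hence along every arc of `D*v`, which is an arc or a path of length two
in `D`. It also strictly increases along every arc of `D ▷ uv`: the new arcs `v → w` come from
arcs `u → w`, and `u` and `v` have the same ancestors since they have the same in-neighbours.
-/

/-- A digraph, given by its arc relation, is acyclic if it has no directed
cycle. -/
def AcyclicRel {V : Type*} (R : V → V → Prop) : Prop :=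
  ∀ v : V, ¬ Relation.TransGen R v v

/-- Local complementation at `v`: arc set `A(D) Δ (N⁻_D(v) × N⁺_D(v))`. -/
def localComp {V : Type*} (R : V → V → Prop) (v : V) : V → V → Prop :=
  fun x y => Xor' (R x y) (R x v ∧ R v y)

/-- The slide on `uv`: arc set `A(D) Δ {(v,w) : w ∈ N⁺_D(u)}`. -/
def slideRel {V : Type*} (R : V → V → Prop) (u v : V) : V → V → Prop :=
  fun x y => Xor' (R x y) (x = v ∧ R u y)

open Relation

section

variable {V : Type*} {R : V → V → Prop}

theorem acyclicRel_of_map_lt {α : Type*} [Preorder α] {S : V → V → Prop} (f : V → α)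
    (hf : ∀ x y, S x y → f x < f y) : AcyclicRel S := fun v hv =>
  lt_irrefl (f v) (transGen_minimal (r' := Function.onFun (· < ·) f) hf v v hv)

def ancestors (R : V → V → Prop) (x : V) : Set V := {y | TransGen R y x}

theorem ancestors_ssubset_of_transGen (hR : AcyclicRel R) {a b : V} (h : TransGen R a b) :
    ancestors R a ⊂ ancestors R b :=
  (Set.ssubset_iff_of_subset fun _ hy => hy.trans h).mpr ⟨a, h, hR a⟩

theorem ancestors_eq_of_forall_iff {u v : V} (hN : ∀ w, R w u ↔ R w v) :
    ancestors R u = ancestors R v := by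
  ext w
  simp only [ancestors, Set.mem_ofPred_eq, TransGen.tail'_iff, hN]

theorem localComp_iff {v x y : V} : localComp R v x y ↔ Xor (R x y) (R x v ∧ R v y) := .rfl

theorem localComp_localComp {v : V} (hv : ¬ R v v) : localComp (localComp R v) v = R := by
  funext x y
  simp only [localComp_iff, xor_def, hv, and_false, false_and, eq_iff_iff]
  tauto

theorem transGen_of_localComp {v x y : V} (h : localComp R v x y) : TransGen R x y := by
  rcases h with ⟨hxy, -⟩ | ⟨⟨hxv, hvy⟩, -⟩
  · exact .single hxy
  · exact .tail (.single hxv) hvy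

theorem AcyclicRel.localComp (hR : AcyclicRel R) (v : V) : AcyclicRel (localComp R v) :=
  acyclicRel_of_map_lt (ancestors R) fun _ _ h =>
    ancestors_ssubset_of_transGen hR (transGen_of_localComp h)

theorem slideRel_iff {u v x y : V} : slideRel R u v x y ↔ Xor (R x y) (x = v ∧ R u y) := .rfl

theorem slideRel_of_ne {u v x : V} (hx : x ≠ v) (y : V) : slideRel R u v x y ↔ R x y := by
  simp [slideRel_iff, xor_def, hx]

theorem slideRel_slideRel {u v : V} (huv : u ≠ v) : slideRel (slideRel R u v) u v = R := by
  funext x y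
  rw [eq_iff_iff, slideRel_iff, slideRel_of_ne huv, slideRel_iff, xor_def, xor_def]
  tauto

theorem slideRel_left_iff_right {u v : V} (hN : ∀ w, R w u ↔ R w v) (w : V) :
    slideRel R u v w u ↔ slideRel R u v w v := by
  by_cases hw : w = v
  · subst hw
    simp only [slideRel_iff, true_and, hN u, hN w]
  · simp only [slideRel_of_ne hw, hN w]

theorem AcyclicRel.slideRel {u v : V} (hN : ∀ w, R w u ↔ R w v) (hR : AcyclicRel R) :
    AcyclicRel (slideRel R u v) := by
  refine acyclicRel_of_map_lt (ancestors R) fun x y h => ?_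
  rcases h with ⟨hxy, -⟩ | ⟨⟨rfl, huy⟩, -⟩
  · exact ancestors_ssubset_of_transGen hR (.single hxy)
  · rw [← ancestors_eq_of_forall_iff hN]
    exact ancestors_ssubset_of_transGen hR (.single huy)

end

theorem localComp_slide_basic_general {V : Type*} (R : V → V → Prop)
    (hirr : ∀ x : V, ¬ R x x) :
    (∀ v : V,
      localComp (localComp R v) v = R ∧
      (AcyclicRel R → AcyclicRel (localComp R v))) ∧
    (∀ u v : V, u ≠ v → (∀ w, R w u ↔ R w v) →
      (∀ w, slideRel R u v w u ↔ slideRel R u v w v) ∧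
      slideRel (slideRel R u v) u v = R ∧
      (AcyclicRel R → AcyclicRel (slideRel R u v))) :=
  ⟨fun v => ⟨localComp_localComp (hirr v), fun hR => hR.localComp v⟩,
    fun _ _ huv hN =>
      ⟨slideRel_left_iff_right hN, slideRel_slideRel huv, fun hR => hR.slideRel hN⟩⟩

/-- Basic properties of local complementation and slide on a digraph `D`
(a finite irreflexive arc relation): `(D*v)*v = D`; local complementation
preserves acyclicity; and for distinct `u, v` with `N⁻_D(u) = N⁻_D(v)`:
`N⁻_{D▷uv}(u) = N⁻_{D▷uv}(v)`, `(D▷uv)▷uv = D`, and the slide preserves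
acyclicity. -/
theorem localComp_slide_basic {V : Type*} [Fintype V] (R : V → V → Prop)
    (hirr : ∀ x : V, ¬ R x x) :
    (∀ v : V,
      localComp (localComp R v) v = R ∧
      (AcyclicRel R → AcyclicRel (localComp R v))) ∧
    (∀ u v : V, u ≠ v → (∀ w, R w u ↔ R w v) →
      (∀ w, slideRel R u v w u ↔ slideRel R u v w v) ∧
      slideRel (slideRel R u v) u v = R ∧
      (AcyclicRel R → AcyclicRel (slideRel R u v))) :=
  localComp_slide_basic_general R hirr
end

section
/- Let A be a strictly upper triangular n×n matrix over 𝔽₂ and let R(A) = 𝔽₂[x_1,…,x_n]/(x_j² − x_j α_j : j = 1,…,n) where α_j = ∑_{i=1}^n A^i_j x_i. Let H¹ denote the 𝔽₂-span in R(A) of the images of x_1,…,x_n. If α ∈ H¹ is an eigen-element, i.e. there exists x ∈ H¹ with x² = α x, x ≠ 0 and x ≠ α, then α = α_j for some j ∈ {1,…,n}; moreover, for such α, the eigen-space {x ∈ H¹ : x² = α x} is the 𝔽₂-span of α together with all x_i satisfying α_i = α. -/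
open MvPolynomial

/-- The polynomial `α_j = ∑_i A^i_j x_i`. -/
noncomputable def alphaP {n : ℕ} (A : Matrix (Fin n) (Fin n) (ZMod 2)) (j : Fin n) :
    MvPolynomial (Fin n) (ZMod 2) :=
  ∑ i : Fin n, C (A i j) * X i

/-- The ideal `(x_j² − x_j α_j : j = 1,…,n)`. -/
noncomputable def relIdeal {n : ℕ} (A : Matrix (Fin n) (Fin n) (ZMod 2)) :
    Ideal (MvPolynomial (Fin n) (ZMod 2)) :=
  Ideal.span {p | ∃ j : Fin n, p = X j ^ 2 - X j * alphaP A j}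

/-- `R(A) = 𝔽₂[x_1,…,x_n]/(x_j² − x_j α_j)`, the mod 2 cohomology ring of the
real Bott manifold `M(A)`. -/
def CohomRing {n : ℕ} (A : Matrix (Fin n) (Fin n) (ZMod 2)) : Type :=
  MvPolynomial (Fin n) (ZMod 2) ⧸ relIdeal A

noncomputable instance {n : ℕ} (A : Matrix (Fin n) (Fin n) (ZMod 2)) :
    CommRing (CohomRing A) :=
  Ideal.Quotient.commRing (relIdeal A)

noncomputable instance {n : ℕ} (A : Matrix (Fin n) (Fin n) (ZMod 2)) :
    Algebra (ZMod 2) (CohomRing A) :=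
  Ideal.Quotient.algebra (ZMod 2)

/-- The image `x_j` of `X j` in `R(A)`. -/
noncomputable def xcl {n : ℕ} (A : Matrix (Fin n) (Fin n) (ZMod 2)) (j : Fin n) :
    CohomRing A :=
  Ideal.Quotient.mk (relIdeal A) (X j)

/-- The image of `α_j` in `R(A)`. -/
noncomputable def alphacl {n : ℕ} (A : Matrix (Fin n) (Fin n) (ZMod 2)) (j : Fin n) :
    CohomRing A :=
  Ideal.Quotient.mk (relIdeal A) (alphaP A j)

/-- `H¹`: the `𝔽₂`-span of the images of `x_1,…,x_n` in `R(A)`. -/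
noncomputable def H1 {n : ℕ} (A : Matrix (Fin n) (Fin n) (ZMod 2)) :
    Submodule (ZMod 2) (CohomRing A) :=
  Submodule.span (ZMod 2) (Set.range (xcl A))

/-!
In degree two, `R(A)` has basis `x_a x_b` (`a < b`), because `x_b² = ∑_{a<b} A_ab x_a x_b`. For
`x = ∑ c_i x_i` and `α = ∑ t_i x_i`, comparing the coefficients of `x_a x_b` in `x² = α x` gives
`c_b A_ab = t_a c_b + t_b c_a + A_ab t_b c_b`. If `j` is the largest index with `c_j = 1`, these
relations force `t_j = 0` unless `c = t`, and then `t` is the `j`-th column of `A`, i.e. `α = α_j`.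
Squaring is additive in characteristic two, so the eigen-space is a subspace containing `x_j`;
adding `x_j` to `x` shrinks its support, and induction gives the span description.

The coefficients are read off by a linear functional on `𝔽₂[x_1,…,x_n]` that vanishes on the
relation ideal: it only sees degree-two coefficients and the relations are homogeneous quadrics.
-/

namespace MvPolynomial

variable {σ R : Type*} [CommSemiring R]

theorem coeff_mul_of_isHomogeneous {g : MvPolynomial σ R} {k : ℕ} (hg : g.IsHomogeneous k)
    (q : MvPolynomial σ R) {m : σ →₀ ℕ} (hm : m.degree = k) :
    coeff m (q * g) = constantCoeff q * coeff m g := by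
  classical
  rw [coeff_mul, Finset.sum_eq_single (0, m)]
  · rfl
  · rintro ⟨d, e⟩ hde hne
    rw [Finset.HasAntidiagonal.mem_antidiagonal] at hde
    dsimp only at hde ⊢
    have hd : d.degree ≠ 0 := by
      rw [Ne, Finsupp.degree_eq_zero_iff]
      rintro rfl
      simp_all
    rw [hg.coeff_eq_zero, mul_zero]
    rw [← hde, map_add] at hm
    omega
  · simp

variable [Fintype σ]

noncomputable def linearForm (c : σ → R) : MvPolynomial σ R := ∑ i, C (c i) * X i

theorem isHomogeneous_linearForm (c : σ → R) : (linearForm c).IsHomogeneous 1 :=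
  IsHomogeneous.sum _ _ _ fun i _ => isHomogeneous_C_mul_X (c i) i

theorem linearForm_pi_single [DecidableEq σ] (j : σ) : linearForm (Pi.single j (1 : R)) = X j := by
  rw [linearForm, Fintype.sum_eq_single j] <;> simp_all

theorem linearForm_mul_linearForm (u c : σ → R) :
    linearForm u * linearForm c =
      ∑ i, ∑ j, monomial (Finsupp.single i 1 + Finsupp.single j 1) (u i * c j) := by
  simp only [linearForm, Finset.sum_mul_sum, C_mul_X_eq_monomial, monomial_mul]

theorem coeff_linearForm_mul_linearForm_of_ne (u c : σ → R) {a b : σ} (hab : a ≠ b) :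
    coeff (Finsupp.single a 1 + Finsupp.single b 1) (linearForm u * linearForm c) =
      u a * c b + u b * c a := by
  classical
  simp only [linearForm_mul_linearForm, coeff_sum, coeff_monomial,
    Finsupp.single_add_single_eq_single_add_single one_ne_zero one_ne_zero]
  rw [Fintype.sum_eq_add a b hab]
  · simp [hab, hab.symm]
  · rintro i ⟨hia, hib⟩
    simp [hia, hib]

theorem coeff_linearForm_mul_linearForm_self (u c : σ → R) (a : σ) :
    coeff (Finsupp.single a 1 + Finsupp.single a 1) (linearForm u * linearForm c) = u a * c a := by
  classical
  simp only [linearForm_mul_linearForm, coeff_sum, coeff_monomial,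
    Finsupp.single_add_single_eq_single_add_single one_ne_zero one_ne_zero]
  rw [Fintype.sum_eq_single a]
  · simp
  · intro i hia
    simp [hia]

end MvPolynomial

theorem ZMod.eq_one_of_ne_zero_two {x : ZMod 2} (hx : x ≠ 0) : x = 1 := by
  revert x; decide

section CharTwo

variable {R : Type*} [CommRing R] [Algebra (ZMod 2) R]

theorem two_eq_zero_of_zmod_two_algebra : (2 : R) = 0 := by
  rw [← map_ofNat (algebraMap (ZMod 2) R) 2, show (OfNat.ofNat 2 : ZMod 2) = 0 from rfl, map_zero]

theorem add_self_eq_zero_of_zmod_two_algebra (x : R) : x + x = 0 := by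
  rw [← two_mul, two_eq_zero_of_zmod_two_algebra, zero_mul]

def sqEigenspace (α : R) : Submodule (ZMod 2) R where
  carrier := {x | x ^ 2 = α * x}
  add_mem' {x y} hx hy := by
    simp only [Set.mem_ofPred_eq] at *
    linear_combination hx + hy + x * y * two_eq_zero_of_zmod_two_algebra (R := R)
  zero_mem' := by simp
  smul_mem' r x hx := by
    simp only [Set.mem_ofPred_eq] at *
    rw [smul_pow, ZMod.pow_card, hx, mul_smul_comm]

theorem mem_sqEigenspace {α x : R} : x ∈ sqEigenspace α ↔ x ^ 2 = α * x := Iff.rfl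

end CharTwo

section BottRing

variable {n : ℕ} (A : Matrix (Fin n) (Fin n) (ZMod 2))

theorem mk_linearForm (c : Fin n → ZMod 2) :
    Ideal.Quotient.mk (relIdeal A) (linearForm c) = ∑ i, c i • xcl A i := by
  simp only [linearForm, C_mul', xcl, ← Ideal.Quotient.mkₐ_eq_mk (ZMod 2), map_sum, map_smul]
  rfl

theorem alphacl_eq_sum (j : Fin n) : alphacl A j = ∑ i, A i j • xcl A i :=
  mk_linearForm A _

theorem xcl_sq (j : Fin n) : xcl A j ^ 2 = alphacl A j * xcl A j := by
  have h : Ideal.Quotient.mk (relIdeal A) (X j ^ 2 - X j * alphaP A j) = 0 :=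
    Ideal.Quotient.eq_zero_iff_mem.mpr (Ideal.subset_span ⟨j, rfl⟩)
  rw [map_sub, sub_eq_zero, map_pow, map_mul] at h
  exact h.trans (mul_comm _ _)

/-- The coefficient of `x_a x_b` after rewriting `x_b²` as `x_b α_b`; for `a < b` it kills the
relations. -/
noncomputable def pairCoeff (a b : Fin n) : MvPolynomial (Fin n) (ZMod 2) →ₗ[ZMod 2] ZMod 2 :=
  lcoeff (ZMod 2) (Finsupp.single a 1 + Finsupp.single b 1) +
    A a b • lcoeff (ZMod 2) (Finsupp.single b 1 + Finsupp.single b 1)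

theorem pairCoeff_mul_of_isHomogeneous (a b : Fin n) (q : MvPolynomial (Fin n) (ZMod 2))
    {g : MvPolynomial (Fin n) (ZMod 2)} (hg : g.IsHomogeneous 2) :
    pairCoeff A a b (q * g) = constantCoeff q * pairCoeff A a b g := by
  simp [pairCoeff, coeff_mul_of_isHomogeneous hg, mul_add, mul_left_comm]

theorem pairCoeff_linearForm_mul {a b : Fin n} (hab : a ≠ b) (u c : Fin n → ZMod 2) :
    pairCoeff A a b (linearForm u * linearForm c) =
      u a * c b + u b * c a + A a b * (u b * c b) := by
  simp [pairCoeff, coeff_linearForm_mul_linearForm_of_ne _ _ hab,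
    coeff_linearForm_mul_linearForm_self]

variable {A}

theorem pairCoeff_relation (hA : ∀ i j : Fin n, j ≤ i → A i j = 0) {a b : Fin n} (hab : a < b)
    (j : Fin n) : pairCoeff A a b (X j ^ 2 - X j * alphaP A j) = 0 := by
  rw [sq, ← linearForm_pi_single (R := ZMod 2), alphaP, ← linearForm, map_sub,
    pairCoeff_linearForm_mul A hab.ne, pairCoeff_linearForm_mul A hab.ne]
  rcases eq_or_ne j b with rfl | hjb
  · simp [hab.ne, hA j j le_rfl]
  · rcases eq_or_ne j a with rfl | hja
    · simp [hab.ne', hA b j hab.le]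
    · simp [hja.symm, hjb.symm]

theorem pairCoeff_eq_zero_of_mem (hA : ∀ i j : Fin n, j ≤ i → A i j = 0) {a b : Fin n}
    (hab : a < b) {p : MvPolynomial (Fin n) (ZMod 2)} (hp : p ∈ relIdeal A) :
    pairCoeff A a b p = 0 := by
  have hrange : relIdeal A = Ideal.span (Set.range fun j => X j ^ 2 - X j * alphaP A j) := by
    simp only [relIdeal, Set.range, eq_comm]
  rw [hrange, Ideal.mem_span_range_iff_exists_fun] at hp
  obtain ⟨q, rfl⟩ := hp
  have hg (j : Fin n) : (X j ^ 2 - X j * alphaP A j).IsHomogeneous 2 :=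
    (isHomogeneous_X_pow j 2).sub ((isHomogeneous_X _ j).mul (isHomogeneous_linearForm _))
  simp [pairCoeff_mul_of_isHomogeneous A a b _ (hg _), pairCoeff_relation hA hab]

theorem pair_relation_of_sq_eq_mul (hA : ∀ i j : Fin n, j ≤ i → A i j = 0)
    {c t : Fin n → ZMod 2}
    (h : (∑ i, c i • xcl A i) ^ 2 = (∑ i, t i • xcl A i) * ∑ i, c i • xcl A i)
    {a b : Fin n} (hab : a < b) :
    c b * A a b = t a * c b + t b * c a + A a b * (t b * c b) := by
  have hmem : linearForm c ^ 2 - linearForm t * linearForm c ∈ relIdeal A := by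
    rw [← Ideal.Quotient.eq_zero_iff_mem, map_sub, map_pow, map_mul, mk_linearForm, mk_linearForm]
    exact sub_eq_zero.mpr h
  have h0 := pairCoeff_eq_zero_of_mem hA hab hmem
  rw [map_sub, sq, pairCoeff_linearForm_mul A hab.ne, pairCoeff_linearForm_mul A hab.ne] at h0
  have hcb : c b * c b = c b := by rw [← sq, ZMod.pow_card]
  linear_combination h0 - A a b * hcb - c a * c b * two_eq_zero_of_zmod_two_algebra (R := ZMod 2)

theorem exists_eq_col_of_pair_relation (hA : ∀ i j : Fin n, j ≤ i → A i j = 0)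
    {c t : Fin n → ZMod 2}
    (h : ∀ a b, a < b → c b * A a b = t a * c b + t b * c a + A a b * (t b * c b))
    (hc : c ≠ 0) (hct : c ≠ t) : ∃ j, c j = 1 ∧ t = fun i => A i j := by
  obtain ⟨j, hj, hmax⟩ := (Finset.univ.filter (c · ≠ 0)).exists_max_image id
    (by simpa [Finset.filter_nonempty_iff, funext_iff] using hc)
  have hcj : c j = 1 := ZMod.eq_one_of_ne_zero_two (by simpa using hj)
  have hc_gt : ∀ k, j < k → c k = 0 := fun k hk => by
    by_contra hk0; exact (hmax k (by simpa using hk0)).not_gt hk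
  have ht_gt : ∀ k, j < k → t k = 0 := fun k hk => by
    simpa [hc_gt k hk, hcj] using (h j k hk).symm
  -- if `t_j = 1`, the relations for the pairs `(i, j)` read `c_i = t_i`
  have htj : t j = 0 := by
    by_contra htj
    replace htj := ZMod.eq_one_of_ne_zero_two htj
    refine hct (funext fun i => ?_)
    rcases lt_trichotomy i j with hij | rfl | hij
    · have := h i j hij; rw [hcj, htj] at this; grind
    · rw [hcj, htj]
    · rw [hc_gt i hij, ht_gt i hij]
  refine ⟨j, hcj, funext fun i => ?_⟩
  rcases lt_trichotomy i j with hij | rfl | hij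
  · simpa [hcj, htj] using (h i j hij).symm
  · rw [htj, hA i i le_rfl]
  · rw [ht_gt i hij, hA i j hij.le]

theorem exists_coord_eq_one_and_alphacl_eq (hA : ∀ i j : Fin n, j ≤ i → A i j = 0)
    {c t : Fin n → ZMod 2}
    (h : (∑ i, c i • xcl A i) ^ 2 = (∑ i, t i • xcl A i) * ∑ i, c i • xcl A i)
    (hc : c ≠ 0) (hct : c ≠ t) : ∃ j, c j = 1 ∧ alphacl A j = ∑ i, t i • xcl A i := by
  obtain ⟨j, hcj, rfl⟩ :=
    exists_eq_col_of_pair_relation hA (fun a b => pair_relation_of_sq_eq_mul hA h) hc hct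
  exact ⟨j, hcj, alphacl_eq_sum A j⟩

theorem card_support_add_single_lt {ι M : Type*} [Fintype ι] [DecidableEq ι] [AddMonoid M]
    [DecidableEq M] {f : ι → M} {j : ι} {a : M} (hj : f j ≠ 0) (ha : f j + a = 0) :
    (Finset.univ.filter fun i => (f + Pi.single j a : ι → M) i ≠ 0).card <
      (Finset.univ.filter fun i => f i ≠ 0).card := by
  refine Finset.card_lt_card (Finset.ssubset_iff_of_subset ?_ |>.mpr ⟨j, by simpa, by simpa⟩)
  intro i
  rcases eq_or_ne i j with rfl | hij <;> simp_all

theorem sum_smul_xcl_mem_span (hA : ∀ i j : Fin n, j ≤ i → A i j = 0) {α : CohomRing A}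
    {t : Fin n → ZMod 2} (ht : ∑ i, t i • xcl A i = α) (c : Fin n → ZMod 2)
    (hc : ∑ i, c i • xcl A i ∈ sqEigenspace α) :
    ∑ i, c i • xcl A i ∈ Submodule.span (ZMod 2)
      ({α} ∪ {x | ∃ i : Fin n, alphacl A i = α ∧ x = xcl A i}) := by
  by_cases hc0 : c = 0
  · simp [hc0]
  by_cases hct : c = t
  · exact Submodule.subset_span (Or.inl (hct ▸ ht))
  obtain ⟨j, hcj, hj⟩ := exists_coord_eq_one_and_alphacl_eq hA (ht ▸ hc) hc0 hct
  rw [ht] at hj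
  have hxj : xcl A j ∈ sqEigenspace α := by rw [mem_sqEigenspace, xcl_sq, hj]
  have hsum : ∑ i, (c + Pi.single j 1 : Fin n → ZMod 2) i • xcl A i =
      ∑ i, c i • xcl A i + xcl A j := by
    simp [add_smul, Finset.sum_add_distrib, Pi.single_apply, ite_smul]
  have hrest := sum_smul_xcl_mem_span hA ht (c + Pi.single j 1) (hsum ▸ add_mem hc hxj)
  rw [hsum] at hrest
  simpa [add_assoc, add_self_eq_zero_of_zmod_two_algebra] using
    add_mem hrest (Submodule.subset_span (Or.inr ⟨j, hj, rfl⟩))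
termination_by (Finset.univ.filter fun i => c i ≠ 0).card
decreasing_by exact card_support_add_single_lt (by simp [hcj]) (by rw [hcj]; rfl)

theorem H1_inf_sqEigenspace_eq_span (hA : ∀ i j : Fin n, j ≤ i → A i j = 0) {α : CohomRing A}
    (hα : α ∈ H1 A) :
    H1 A ⊓ sqEigenspace α =
      Submodule.span (ZMod 2) ({α} ∪ {x | ∃ i : Fin n, alphacl A i = α ∧ x = xcl A i}) := by
  refine le_antisymm ?_ (Submodule.span_le.mpr ?_)
  · rintro x ⟨hxH, hx⟩
    obtain ⟨c, rfl⟩ := (Submodule.mem_span_range_iff_exists_fun (ZMod 2)).mp hxH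
    obtain ⟨t, ht⟩ := (Submodule.mem_span_range_iff_exists_fun (ZMod 2)).mp hα
    exact sum_smul_xcl_mem_span hA ht c hx
  · rintro x (rfl | ⟨i, hi, rfl⟩)
    · exact ⟨hα, sq x⟩
    · exact ⟨Submodule.subset_span ⟨i, rfl⟩, by rw [SetLike.mem_coe, mem_sqEigenspace, xcl_sq, hi]⟩

end BottRing

/-- For a strictly upper triangular `A`, every eigen-element `α` of `R(A)`
(an `α ∈ H¹` such that `x² = α x` for some `x ∈ H¹` with `x ≠ 0`, `x ≠ α`)
equals some `α_j`, and its eigen-space `{x ∈ H¹ : x² = α x}` is the `𝔽₂`-span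
of `α` together with all `x_i` with `α_i = α`. -/
theorem eigen_element_characterization {n : ℕ}
    (A : Matrix (Fin n) (Fin n) (ZMod 2))
    (hA : ∀ i j : Fin n, j ≤ i → A i j = 0)
    (α : CohomRing A) (hα : α ∈ H1 A)
    (heigen : ∃ x : CohomRing A, x ∈ H1 A ∧ x ^ 2 = α * x ∧ x ≠ 0 ∧ x ≠ α) :
    (∃ j : Fin n, α = alphacl A j) ∧
    {x : CohomRing A | x ∈ H1 A ∧ x ^ 2 = α * x} =
      ↑(Submodule.span (ZMod 2)
        ({α} ∪ {x : CohomRing A | ∃ i : Fin n, alphacl A i = α ∧ x = xcl A i})) := by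
  refine ⟨?_, by rw [← H1_inf_sqEigenspace_eq_span hA hα]; rfl⟩
  obtain ⟨t, rfl⟩ := (Submodule.mem_span_range_iff_exists_fun (ZMod 2)).mp hα
  obtain ⟨x, hxH, hx, hx0, hxα⟩ := heigen
  obtain ⟨c, rfl⟩ := (Submodule.mem_span_range_iff_exists_fun (ZMod 2)).mp hxH
  obtain ⟨j, -, hj⟩ := exists_coord_eq_one_and_alphacl_eq hA hx
    (by rintro rfl; simp at hx0) (by rintro rfl; exact hxα rfl)
  exact ⟨j, hj.symm⟩
end

section
/- Let D be an indecomposable acyclic digraph, let Y = V(D)∖L₀(D), and let G be an acyclic digraph disjoint from D. If H is obtained from the disjoint union D ⊕ G by applying a finite sequence of slides on pairs of roots of D ⊕ G, then there exists a set X of roots of H with |X| = |L₀(D)| such that the induced subgraph H[X ∪ Y] is connected. -/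
/-- One graph operation: a local complementation or a legal slide. -/
inductive GStep {V : Type*} : (V → V → Prop) → (V → V → Prop) → Prop
  | lc (R : V → V → Prop) (v : V) : GStep R (localComp R v)
  | sl (R : V → V → Prop) (u v : V) (h : u ≠ v) (hN : ∀ w, R w u ↔ R w v) :
      GStep R (slideRel R u v)

/-- Bott equivalence of digraphs. -/
def BottEquivD {V : Type*} {W : Type*} (R : V → V → Prop) (S : W → W → Prop) : Prop :=
  ∃ R' : V → V → Prop, Relation.ReflTransGen GStep R R' ∧
    ∃ e : V ≃ W, ∀ a b : V, R' a b ↔ S (e a) (e b)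

/-- A digraph is connected if its underlying undirected graph is connected. -/
def ConnectedRel {V : Type*} (R : V → V → Prop) : Prop :=
  ∀ a b : V, Relation.ReflTransGen (fun x y => R x y ∨ R y x) a b

/-- An acyclic digraph is indecomposable if every acyclic digraph Bott
equivalent to it is connected. -/
def IndecompD {V : Type*} [Fintype V] (R : V → V → Prop) : Prop :=
  ∀ (m : ℕ) (S : Fin m → Fin m → Prop), BottEquivD R S → ConnectedRel S

/-- One slide performed on a pair of distinct roots. -/
inductive RootSlide {V : Type*} : (V → V → Prop) → (V → V → Prop) → Prop
  | mk (R : V → V → Prop) (u v : V) (h : u ≠ v)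
      (hu : ∀ w, ¬ R w u) (hv : ∀ w, ¬ R w v) : RootSlide R (slideRel R u v)

/-- The induced subgraph of `R` on `S` is connected. -/
def ConnectedOn {V : Type*} (R : V → V → Prop) (S : Set V) : Prop :=
  ∀ a ∈ S, ∀ b ∈ S,
    Relation.ReflTransGen (fun x y => x ∈ S ∧ y ∈ S ∧ (R x y ∨ R y x)) a b

/-!
A slide on two roots `u, v` keeps the set of roots and adds, over GF(2), the out-neighbourhood
of `u` to that of `v`: it multiplies the root rows of the adjacency matrix on the left by a
transvection. So `H` is `D ⊕ G` with its root rows recombined by an invertible GF(2)-matrix `E`.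
The columns of `E` at the roots of `D` are independent, so some `|L₀(D)|` roots of `H` (the set
`X`) carry an invertible square block `F` of them. Invertible GF(2)-matrices are products of
transvections, so recombining the root rows of `D` by `F` is a sequence of root slides on `D`;
the result is Bott equivalent to `D`, hence connected, and it maps arc by arc into `H[X ∪ Y]`
by sending the roots of `D` to `X` and fixing `Y`.
-/

open Matrix

theorem Matrix.exists_injective_isUnit_submatrix {K ρ κ : Type*} [Field K] [Fintype ρ]
    [Fintype κ] [DecidableEq κ] {B : Matrix ρ κ K} (hB : LinearIndependent K B.col) :
    ∃ ι : κ → ρ, Function.Injective ι ∧ IsUnit (B.submatrix ι id) := by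
  obtain ⟨κ', a, ha, hspan, hli⟩ := exists_linearIndependent' K B.row
  have : Finite κ' := .of_injective a ha
  cases nonempty_fintype κ'
  have hcard : Fintype.card κ = Fintype.card κ' := by
    rw [← finrank_span_eq_card hli, hspan, ← rank_eq_finrank_span_row, ← rank_transpose]
    exact hB.rank_matrix.symm
  obtain e := Fintype.equivOfCardEq hcard
  exact ⟨a ∘ e, ha.comp e.injective,
    linearIndependent_rows_iff_isUnit.mp (hli.comp e e.injective)⟩

theorem ZMod.xor_eq_one_iff_add_eq_one (p q : ZMod 2) : Xor (p = 1) (q = 1) ↔ p + q = 1 := by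
  revert p q
  decide

section Connectivity

variable {α β : Type*}

theorem ConnectedRel.connectedOn_range {R : α → α → Prop} {S : β → β → Prop}
    {f : α → β} (hR : ConnectedRel R) (hf : ∀ x y, R x y → S (f x) (f y)) :
    ConnectedOn S (Set.range f) := by
  rintro _ ⟨a, rfl⟩ _ ⟨b, rfl⟩
  exact (hR a b).lift f fun x y hxy => ⟨⟨x, rfl⟩, ⟨y, rfl⟩, hxy.imp (hf x y) (hf y x)⟩

theorem ConnectedRel.of_equiv {R : α → α → Prop} {S : β → β → Prop}
    (hS : ConnectedRel S) (e : α ≃ β) (he : ∀ a b, R a b ↔ S (e a) (e b)) :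
    ConnectedRel R := by
  intro a b
  simpa [Function.onFun] using (hS (e a) (e b)).lift e.symm (p := fun x y => R x y ∨ R y x)
    fun x y hxy => by simpa only [Function.onFun, he, Equiv.apply_symm_apply] using hxy

theorem IndecompD.connectedRel [Fintype α] {R R' : α → α → Prop} (hind : IndecompD R)
    (h : Relation.ReflTransGen GStep R R') : ConnectedRel R' :=
  let e := Fintype.equivFin α
  (hind _ (fun i j => R' (e.symm i) (e.symm j)) ⟨R', h, e, fun a b => by simp⟩).of_equiv e
    fun a b => by simp

theorem reflTransGen_gStep_of_rootSlides {R R' : α → α → Prop}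
    (h : Relation.ReflTransGen RootSlide R R') : Relation.ReflTransGen GStep R R' := by
  refine Relation.ReflTransGen.mono (fun _ _ hs => ?_) _ _ h
  obtain ⟨u, v, huv, hu, hv⟩ := hs
  exact GStep.sl _ u v huv fun w => iff_of_false (hu w) (hv w)

end Connectivity

section Roots

variable {U : Type*}

def roots (R : U → U → Prop) : Set U := {b | ∀ w, ¬ R w b}

theorem compl_roots (R : U → U → Prop) : (roots R)ᶜ = {b | ∃ w, R w b} := by
  ext b
  simp [roots]

theorem mem_roots_slideRel {R : U → U → Prop} {u v b : U} (huv : u ≠ v) :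
    b ∈ roots (slideRel R u v) ↔ b ∈ roots R := by
  show (∀ w, ¬ Xor (R w b) (w = v ∧ R u b)) ↔ ∀ w, ¬ R w b
  simp only [xor_def]
  constructor
  · intro h w hw
    by_cases hwv : w = v
    · subst hwv
      by_cases hub : R u b
      · exact h u (Or.inl ⟨hub, fun h' => huv h'.1⟩)
      · exact h w (Or.inl ⟨hw, fun h' => hub h'.2⟩)
    · exact h w (Or.inl ⟨hw, fun h' => hwv h'.1⟩)
  · rintro h w (⟨hw, -⟩ | ⟨⟨-, hub⟩, -⟩)
    · exact h w hw
    · exact h u hub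

theorem roots_eq_of_rootSlides {R H : U → U → Prop} (h : Relation.ReflTransGen RootSlide R H) :
    roots H = roots R := by
  induction h with
  | refl => rfl
  | tail _ hs ih =>
    obtain ⟨u, v, huv, -, -⟩ := hs
    ext b
    rw [mem_roots_slideRel huv, ih]

end Roots

section RootRecombination

variable {U : Type*} [Finite U] {R : U → U → Prop}

noncomputable instance (R : U → U → Prop) : Fintype (roots R) := Fintype.ofFinite _

noncomputable instance (R : U → U → Prop) : DecidableEq (roots R) := Classical.decEq _

open Classical in
noncomputable def rootRows (R : U → U → Prop) : Matrix (roots R) U (ZMod 2) :=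
  Matrix.of fun s b => if R s b then 1 else 0

open Classical in
/-- `R` with the out-neighbourhood of each root replaced by the GF(2)-combination of the
out-neighbourhoods of the roots of `R` given by the corresponding row of `E`. -/
noncomputable def recombineRoots (R : U → U → Prop)
    (E : Matrix (roots R) (roots R) (ZMod 2)) : U → U → Prop :=
  fun a b => if h : a ∈ roots R then (E * rootRows R) ⟨a, h⟩ b = 1 else R a b

theorem recombineRoots_of_mem (E : Matrix (roots R) (roots R) (ZMod 2)) {a : U}
    (h : a ∈ roots R) (b : U) : recombineRoots R E a b ↔ (E * rootRows R) ⟨a, h⟩ b = 1 := by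
  rw [recombineRoots, dif_pos h]

theorem recombineRoots_of_notMem (E : Matrix (roots R) (roots R) (ZMod 2)) {a : U}
    (h : a ∉ roots R) (b : U) : recombineRoots R E a b ↔ R a b := by
  rw [recombineRoots, dif_neg h]

theorem recombineRoots_one : recombineRoots R 1 = R := by
  ext a b
  by_cases h : a ∈ roots R
  · rw [recombineRoots_of_mem 1 h, Matrix.one_mul, rootRows, of_apply]
    split_ifs with hab <;> simp [hab]
  · rw [recombineRoots_of_notMem 1 h]

theorem roots_subset_roots_recombineRoots (E : Matrix (roots R) (roots R) (ZMod 2)) :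
    roots R ⊆ roots (recombineRoots R E) := by
  intro b hb a
  by_cases ha : a ∈ roots R
  · simp [recombineRoots_of_mem E ha, Matrix.mul_apply, rootRows, hb _]
  · rw [recombineRoots_of_notMem E ha]
    exact hb a

theorem slideRel_recombineRoots (E : Matrix (roots R) (roots R) (ZMod 2)) {u v : U}
    (hu : u ∈ roots R) (hv : v ∈ roots R) :
    slideRel (recombineRoots R E) u v =
      recombineRoots R (transvection ⟨v, hv⟩ ⟨u, hu⟩ 1 * E) := by
  ext x y
  by_cases hxv : x = v
  · subst hxv
    rw [slideRel, recombineRoots_of_mem _ hv, recombineRoots_of_mem _ hv,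
      recombineRoots_of_mem _ hu, Matrix.mul_assoc, transvection_mul_apply_same, one_mul,
      eq_self, true_and]
    exact ZMod.xor_eq_one_iff_add_eq_one _ _
  · have hrow : ∀ hx : x ∈ roots R,
        (transvection (⟨v, hv⟩ : roots R) ⟨u, hu⟩ (1 : ZMod 2) * E * rootRows R)
          ⟨x, hx⟩ y = (E * rootRows R) ⟨x, hx⟩ y := fun hx => by
      rw [Matrix.mul_assoc, transvection_mul_apply_of_ne _ _ _ _ (by simpa using hxv)]
    show Xor _ (x = v ∧ _) ↔ _
    simp only [hxv, false_and, xor_comm _ False, xor_false, id]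
    by_cases hx : x ∈ roots R
    · rw [recombineRoots_of_mem _ hx, recombineRoots_of_mem _ hx, hrow]
    · rw [recombineRoots_of_notMem _ hx, recombineRoots_of_notMem _ hx]

theorem exists_isUnit_eq_recombineRoots {H : U → U → Prop}
    (h : Relation.ReflTransGen RootSlide R H) :
    ∃ E : Matrix (roots R) (roots R) (ZMod 2), IsUnit E ∧ H = recombineRoots R E := by
  induction h with
  | refl => exact ⟨1, isUnit_one, recombineRoots_one.symm⟩
  | tail hRH hs ih =>
    obtain ⟨E, hE, rfl⟩ := ih
    obtain ⟨u, v, huv, hu, hv⟩ := hs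
    have hroots := roots_eq_of_rootSlides hRH
    have hu' : u ∈ roots R := hroots ▸ hu
    have hv' : v ∈ roots R := hroots ▸ hv
    have hT : IsUnit (transvection (⟨v, hv'⟩ : roots R) ⟨u, hu'⟩ (1 : ZMod 2)) := by
      rw [isUnit_iff_isUnit_det, det_transvection_of_ne _ _ (by simpa using huv.symm)]
      exact isUnit_one
    exact ⟨_, hT.mul hE, slideRel_recombineRoots E hu' hv'⟩

theorem rootSlides_recombineRoots_mul {F : Matrix (roots R) (roots R) (ZMod 2)}
    (hF : IsUnit F) (E : Matrix (roots R) (roots R) (ZMod 2)) :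
    Relation.ReflTransGen RootSlide (recombineRoots R E) (recombineRoots R (F * E)) := by
  revert E
  -- over GF(2) the only invertible diagonal matrix is `1`, and `transvection i j 1` is a slide
  refine diagonal_transvection_induction_of_det_ne_zero (fun F => ∀ E,
      Relation.ReflTransGen RootSlide (recombineRoots R E) (recombineRoots R (F * E))) F
    ((isUnit_iff_isUnit_det F).mp hF).ne_zero ?_ ?_ ?_
  · intro d hd E
    have hd1 : d = fun _ => 1 := by
      funext i
      exact (show ∀ c : ZMod 2, c ≠ 0 → c = 1 by decide) _
        (Finset.prod_ne_zero_iff.mp (det_diagonal (d := d) ▸ hd) i (Finset.mem_univ i))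
    rw [hd1, diagonal_one, Matrix.one_mul]
  · rintro ⟨i, j, hij, c⟩ E
    obtain rfl | rfl : c = 0 ∨ c = 1 := by revert c; decide
    · rw [TransvectionStruct.toMatrix_mk, transvection_zero, Matrix.one_mul]
    · rw [TransvectionStruct.toMatrix_mk, ← slideRel_recombineRoots]
      exact .single (RootSlide.mk (recombineRoots R E) j i (Subtype.coe_ne_coe.mpr hij.symm)
        (roots_subset_roots_recombineRoots E j.2) (roots_subset_roots_recombineRoots E i.2))
  · intro A B _ _ hA hB E
    rw [Matrix.mul_assoc]
    exact (hB E).trans (hA (B * E))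

theorem rootSlides_recombineRoots {F : Matrix (roots R) (roots R) (ZMod 2)} (hF : IsUnit F) :
    Relation.ReflTransGen RootSlide R (recombineRoots R F) := by
  simpa only [Matrix.mul_one, recombineRoots_one] using rootSlides_recombineRoots_mul hF 1

end RootRecombination

section DisjointUnion

variable {V W : Type*} (D : V → V → Prop) (G : W → W → Prop)

def inlRoot (d : roots D) : roots (Sum.LiftRel D G) :=
  ⟨.inl d, fun
    | .inl w => Sum.liftRel_inl_inl.not.mpr (d.2 w)
    | .inr _ => Sum.not_liftRel_inr_inl⟩

theorem inlRoot_injective : Function.Injective (inlRoot D G) := fun _ _ h =>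
  Subtype.ext (Sum.inl_injective (congrArg Subtype.val h))

variable {D G}

open Classical in
noncomputable def embedRoots (ι : roots D → roots (Sum.LiftRel D G)) (a : V) : V ⊕ W :=
  if h : a ∈ roots D then ι ⟨a, h⟩ else .inl a

theorem range_embedRoots (ι : roots D → roots (Sum.LiftRel D G)) :
    Set.range (embedRoots ι) =
      Set.range (fun d => (ι d : V ⊕ W)) ∪ .inl '' {v | ∃ w, D w v} := by
  rw [← compl_roots]
  ext z
  constructor
  · rintro ⟨a, rfl⟩
    by_cases ha : a ∈ roots D
    · exact .inl ⟨⟨a, ha⟩, by simp [embedRoots, ha]⟩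
    · exact .inr ⟨a, ha, by simp [embedRoots, ha]⟩
  · rintro (⟨d, rfl⟩ | ⟨a, ha, rfl⟩)
    · exact ⟨d, by simp [embedRoots, d.2]⟩
    · exact ⟨a, by simp [embedRoots, Set.notMem_of_mem_compl ha]⟩

variable [Finite V] [Finite W]

theorem mul_rootRows_liftRel_inl {κ : Type*}
    (E : Matrix κ (roots (Sum.LiftRel D G)) (ZMod 2)) (r : κ) (y : V) :
    (E * rootRows (Sum.LiftRel D G)) r (.inl y) =
      (E.submatrix id (inlRoot D G) * rootRows D) r y := by
  simp only [Matrix.mul_apply]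
  symm
  refine Fintype.sum_of_injective (inlRoot D G) (inlRoot_injective D G) _ _ ?_ fun d => ?_
  · rintro ⟨_ | g, hs⟩ hrange
    · exact absurd ⟨⟨_, fun w hw => hs (.inl w) (.inl hw)⟩, rfl⟩ hrange
    · simp [rootRows, Sum.not_liftRel_inr_inl]
  · by_cases hd : D d y <;> simp [rootRows, inlRoot, hd]

theorem recombineRoots_embedRoots
    {E : Matrix (roots (Sum.LiftRel D G)) (roots (Sum.LiftRel D G)) (ZMod 2)}
    (ι : roots D → roots (Sum.LiftRel D G)) {x y : V}
    (hxy : recombineRoots D (E.submatrix ι (inlRoot D G)) x y) :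
    recombineRoots (Sum.LiftRel D G) E (embedRoots ι x) (embedRoots ι y) := by
  have hy : y ∉ roots D := fun hy => roots_subset_roots_recombineRoots _ hy x hxy
  by_cases hx : x ∈ roots D
  · simp only [embedRoots, hx, hy, dif_pos, dif_neg, not_false_eq_true]
    rw [recombineRoots_of_mem E (ι ⟨x, hx⟩).2, mul_rootRows_liftRel_inl]
    exact (recombineRoots_of_mem _ hx y).mp hxy
  · have hx' : Sum.inl x ∉ roots (Sum.LiftRel D G) := fun h =>
      hx fun w hw => h (.inl w) (.inl hw)
    simp only [embedRoots, hx, hy, dif_neg, not_false_eq_true]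
    rw [recombineRoots_of_notMem E hx', Sum.liftRel_inl_inl]
    exact (recombineRoots_of_notMem _ hx y).mp hxy

end DisjointUnion

theorem indecomposable_component_survives_general {V W : Type*} [Fintype V] [Fintype W]
    (D : V → V → Prop) (G : W → W → Prop)
    (hind : IndecompD D)
    (H : (V ⊕ W) → (V ⊕ W) → Prop)
    (h : Relation.ReflTransGen RootSlide (Sum.LiftRel D G) H) :
    ∃ X : Set (V ⊕ W), X ⊆ {v : V ⊕ W | ∀ w, ¬ H w v} ∧
      Nat.card ↥X = Nat.card {v : V | ∀ w, ¬ D w v} ∧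
      ConnectedOn H (X ∪ Sum.inl '' {v : V | ∃ w, D w v}) := by
  obtain ⟨E, hE, rfl⟩ := exists_isUnit_eq_recombineRoots h
  obtain ⟨ι, hι, hF⟩ := exists_injective_isUnit_submatrix (B := E.submatrix id (inlRoot D G))
    ((linearIndependent_cols_of_isUnit hE).comp _ (inlRoot_injective D G))
  have hconn : ConnectedRel (recombineRoots D (E.submatrix ι (inlRoot D G))) :=
    hind.connectedRel (reflTransGen_gStep_of_rootSlides (rootSlides_recombineRoots hF))
  refine ⟨Set.range fun d => (ι d : V ⊕ W), ?_, ?_, ?_⟩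
  · rintro _ ⟨d, rfl⟩
    exact roots_subset_roots_recombineRoots E (ι d).2
  · exact Nat.card_range_of_injective (Subtype.val_injective.comp hι)
  · rw [← range_embedRoots]
    exact hconn.connectedOn_range fun _ _ => recombineRoots_embedRoots ι

/-- Let `D` be an indecomposable acyclic digraph, `Y = V(D)∖L₀(D)`, and let
`G` be an acyclic digraph disjoint from `D`.  If `H` is obtained from `D ⊕ G`
by slides on pairs of roots, then there is a set `X` of roots of `H` with
`|X| = |L₀(D)|` such that the induced subgraph `H[X ∪ Y]` is connected. -/
theorem indecomposable_component_survives {V W : Type*} [Fintype V] [Fintype W]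
    (D : V → V → Prop) (G : W → W → Prop)
    (hD : AcyclicRel D) (hind : IndecompD D) (hG : AcyclicRel G)
    (H : (V ⊕ W) → (V ⊕ W) → Prop)
    (h : Relation.ReflTransGen RootSlide (Sum.LiftRel D G) H) :
    ∃ X : Set (V ⊕ W), X ⊆ {v : V ⊕ W | ∀ w, ¬ H w v} ∧
      Nat.card ↥X = Nat.card {v : V | ∀ w, ¬ D w v} ∧
      ConnectedOn H (X ∪ Sum.inl '' {v : V | ∃ w, D w v}) :=
  indecomposable_component_survives_general D G hind H h
end

section
/- Bott equivalent acyclic digraphs have the same odd height: if D and H are Bott equivalent acyclic digraphs, then D has a vertex of odd out-degree if and only if H does, and in that case the maximum k such that L_k(D) contains a vertex of odd out-degree equals the maximum k such that L_k(H) contains a vertex of odd out-degree. -/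
/-- There is a directed path with exactly `k` arcs ending at `v`. -/
def EndPath {V : Type*} (R : V → V → Prop) (k : ℕ) (v : V) : Prop :=
  ∃ f : Fin (k + 1) → V, Function.Injective f ∧ f (Fin.last k) = v ∧
    ∀ i : Fin k, R (f i.castSucc) (f i.succ)

/-- The `k`-th level set `L_k(D)`. -/
def levelSet {V : Type*} (R : V → V → Prop) (k : ℕ) : Set V :=
  {v | EndPath R k v ∧ ∀ m : ℕ, k < m → ¬ EndPath R m v}

/-- The out-degree of `v`. -/
noncomputable def outDeg {V : Type*} (R : V → V → Prop) (v : V) : ℕ :=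
  Nat.card {w : V | R v w}

/-!
Let `level R v` be the length of a longest walk ending at `v`. Local complementations and slides
keep an acyclic digraph acyclic and do not change levels: every new arc goes up in level, and
every removed arc `z → x` is replaced by an arc into `x` from a vertex of level at least that of
`z`. Out-degree parities change only at in-neighbours of `v` (local complementation at `v`),
resp. only at `v` (slide `uv`), and only if the pivot `v`, resp. `u`, has odd out-degree; the pivot
keeps its parity and its level is at least that of every vertex whose parity changes. Hence the
existence of an odd vertex and the highest level carrying one are invariant.
-/

open Relation
open scoped symmDiff

section Walks

variable {V : Type*} {R : V → V → Prop}

/-- A walk `f 0 → ⋯ → f k = v`; the values of `f` beyond `k` are irrelevant. -/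
def WalkEnd (R : V → V → Prop) (k : ℕ) (v : V) : Prop :=
  ∃ f : ℕ → V, f k = v ∧ ∀ i < k, R (f i) (f (i + 1))

theorem walkEnd_zero (v : V) : WalkEnd R 0 v :=
  ⟨fun _ => v, rfl, fun _ hi => absurd hi (Nat.not_lt_zero _)⟩

theorem walkEnd_succ_iff {k : ℕ} {v : V} :
    WalkEnd R (k + 1) v ↔ ∃ u, R u v ∧ WalkEnd R k u := by
  constructor
  · rintro ⟨f, rfl, hf⟩
    exact ⟨f k, hf k k.lt_succ_self, f, rfl, fun i hi => hf i (by omega)⟩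
  · rintro ⟨u, huv, f, rfl, hf⟩
    refine ⟨Function.update f (k + 1) v, Function.update_self _ _ _, fun i hi => ?_⟩
    rw [Function.update_of_ne (by omega)]
    obtain hi | rfl := Nat.lt_succ_iff_lt_or_eq.mp hi
    · rw [Function.update_of_ne (by omega)]
      exact hf i hi
    · rwa [Function.update_self]

theorem transGen_of_walk {f : ℕ → V} {k : ℕ} (hf : ∀ i < k, R (f i) (f (i + 1)))
    {i j : ℕ} (hij : i < j) (hjk : j ≤ k) : TransGen R (f i) (f j) := by
  induction j, hij using Nat.le_induction with
  | base => exact .single (hf i (by omega))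
  | succ j _ ih => exact (ih (by omega)).tail (hf j (by omega))

theorem endPath_iff_walkEnd (hR : AcyclicRel R) {k : ℕ} {v : V} :
    EndPath R k v ↔ WalkEnd R k v := by
  constructor
  · rintro ⟨f, -, rfl, hf⟩
    refine ⟨fun n => f (Fin.clamp n k), congrArg f (Fin.ext (min_self k)), fun i hi => ?_⟩
    convert hf ⟨i, hi⟩ using 2 <;> ext <;> simp [Fin.clamp] <;> omega
  · rintro ⟨f, rfl, hf⟩
    have hne : ∀ i j : Fin (k + 1), i < j → f i ≠ f j := fun i j hij heq => by
      have hcycle := transGen_of_walk hf hij (by omega)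
      rw [heq] at hcycle
      exact hR _ hcycle
    refine ⟨fun i => f i, fun i j (hij : f i = f j) => ?_, rfl, fun i => hf i i.isLt⟩
    by_contra hij'
    obtain h | h := lt_or_gt_of_ne hij'
    exacts [hne i j h hij, hne j i h hij.symm]

theorem WalkEnd.lt_card [Finite V] (hR : AcyclicRel R) {k : ℕ} {v : V} (h : WalkEnd R k v) :
    k < Nat.card V := by
  obtain ⟨f, hf, -, -⟩ := (endPath_iff_walkEnd hR).mpr h
  simpa using Nat.card_le_card_of_injective f hf

theorem WalkEnd.le_of_forall_rel_lt {g : V → ℕ} (hg : ∀ z x, R z x → g z < g x) {k : ℕ}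
    {x : V} (h : WalkEnd R k x) : k ≤ g x := by
  induction k generalizing x with
  | zero => exact Nat.zero_le _
  | succ k ih =>
    obtain ⟨u, hux, hu⟩ := walkEnd_succ_iff.mp h
    exact (ih hu).trans_lt (hg u x hux)

theorem acyclicRel_of_forall_rel_lt {g : V → ℕ} (hg : ∀ z x, R z x → g z < g x) :
    AcyclicRel R := by
  have : ∀ a b, TransGen R a b → g a < g b := fun a b h => by
    induction h with
    | single h => exact hg _ _ h
    | tail _ h ih => exact ih.trans (hg _ _ h)
  exact fun v hv => lt_irrefl _ (this v v hv)

end Walks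

section Levels

variable {V : Type*} {R R' : V → V → Prop}

noncomputable def level (R : V → V → Prop) (v : V) : ℕ :=
  sSup {k | WalkEnd R k v}

theorem bddAbove_setOf_walkEnd [Finite V] (hR : AcyclicRel R) (v : V) :
    BddAbove {k | WalkEnd R k v} :=
  ⟨Nat.card V, fun _ hk => (WalkEnd.lt_card hR hk).le⟩

theorem le_level [Finite V] (hR : AcyclicRel R) {k : ℕ} {v : V} (h : WalkEnd R k v) :
    k ≤ level R v :=
  le_csSup (bddAbove_setOf_walkEnd hR v) h

theorem walkEnd_level [Finite V] (hR : AcyclicRel R) (v : V) : WalkEnd R (level R v) v :=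
  Nat.sSup_mem ⟨0, walkEnd_zero v⟩ (bddAbove_setOf_walkEnd hR v)

theorem level_lt_level [Finite V] (hR : AcyclicRel R) {u v : V} (h : R u v) :
    level R u < level R v :=
  le_level hR (walkEnd_succ_iff.mpr ⟨u, h, walkEnd_level hR u⟩)

theorem exists_rel_le_level [Finite V] (hR : AcyclicRel R) {k : ℕ} {v : V}
    (h : k < level R v) : ∃ u, R u v ∧ k ≤ level R u := by
  obtain ⟨m, hm⟩ := Nat.exists_eq_add_of_lt h
  have hwalk := walkEnd_level hR v
  rw [hm] at hwalk
  obtain ⟨u, huv, hu⟩ := walkEnd_succ_iff.mp hwalk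
  exact ⟨u, huv, (Nat.le_add_right k m).trans (le_level hR hu)⟩

theorem level_eq_of_forall_rel_iff {u v : V} (huv : ∀ w, R w u ↔ R w v) :
    level R u = level R v := by
  have hwalk : ∀ k, WalkEnd R k u ↔ WalkEnd R k v := by
    rintro (_ | k)
    · exact iff_of_true (walkEnd_zero u) (walkEnd_zero v)
    · simp only [walkEnd_succ_iff, huv]
  simp only [level, hwalk]

theorem acyclicRel_and_level_eq_of_cover [Finite V] (hR : AcyclicRel R)
    (hlt : ∀ z x, R' z x → level R z < level R x)
    (hcover : ∀ z x, R z x → ∃ z', R' z' x ∧ level R z ≤ level R z') :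
    AcyclicRel R' ∧ level R' = level R := by
  have hR' : AcyclicRel R' := acyclicRel_of_forall_rel_lt hlt
  have hge : ∀ k x, k ≤ level R x → k ≤ level R' x := by
    intro k
    induction k with
    | zero => exact fun _ _ => Nat.zero_le _
    | succ k ih =>
      intro x hx
      obtain ⟨z, hzx, hz⟩ := exists_rel_le_level hR hx
      obtain ⟨z', hz'x, hzz'⟩ := hcover z x hzx
      exact (ih z' (hz.trans hzz')).trans_lt (level_lt_level hR' hz'x)
  refine ⟨hR', funext fun x => le_antisymm ?_ (hge _ x le_rfl)⟩
  exact (walkEnd_level hR' x).le_of_forall_rel_lt hlt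

theorem mem_levelSet_iff [Finite V] (hR : AcyclicRel R) {k : ℕ} {v : V} :
    v ∈ levelSet R k ↔ level R v = k := by
  simp only [levelSet, Set.mem_ofPred_eq, endPath_iff_walkEnd hR]
  constructor
  · rintro ⟨hk, hmax⟩
    by_contra hne
    exact hmax _ (lt_of_le_of_ne (le_level hR hk) (Ne.symm hne)) (walkEnd_level hR v)
  · rintro rfl
    exact ⟨walkEnd_level hR v, fun m hm hm' => (le_level hR hm').not_gt hm⟩

end Levels

section Operations

variable {V : Type*} {R : V → V → Prop}

theorem level_lt_of_localComp [Finite V] (hR : AcyclicRel R) {v z x : V}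
    (h : localComp R v z x) : level R z < level R x := by
  obtain ⟨hzx, -⟩ | ⟨⟨hzv, hvx⟩, -⟩ := h
  · exact level_lt_level hR hzx
  · exact (level_lt_level hR hzv).trans (level_lt_level hR hvx)

theorem exists_localComp_of_rel [Finite V] (hR : AcyclicRel R) (v : V) {z x : V}
    (h : R z x) : ∃ z', localComp R v z' x ∧ level R z ≤ level R z' := by
  by_cases hz : R z v ∧ R v x
  · exact ⟨v, Or.inl ⟨hz.2, fun hv => hR v (.single hv.1)⟩, (level_lt_level hR hz.1).le⟩
  · exact ⟨z, Or.inl ⟨h, hz⟩, le_rfl⟩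

theorem level_lt_of_slideRel [Finite V] (hR : AcyclicRel R) {u v z x : V}
    (huv : ∀ w, R w u ↔ R w v) (h : slideRel R u v z x) : level R z < level R x := by
  obtain ⟨hzx, -⟩ | ⟨⟨rfl, hux⟩, -⟩ := h
  · exact level_lt_level hR hzx
  · exact level_eq_of_forall_rel_iff huv ▸ level_lt_level hR hux

theorem exists_slideRel_of_rel [Finite V] {u v : V} (hne : u ≠ v) (huv : ∀ w, R w u ↔ R w v)
    {z x : V} (h : R z x) : ∃ z', slideRel R u v z' x ∧ level R z ≤ level R z' := by
  by_cases hz : z = v ∧ R u x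
  · obtain ⟨rfl, hux⟩ := hz
    exact ⟨u, Or.inl ⟨hux, fun hu => hne hu.1⟩, (level_eq_of_forall_rel_iff huv).ge⟩
  · exact ⟨z, Or.inl ⟨h, hz⟩, le_rfl⟩

theorem GStep.acyclicRel_and_level_eq [Finite V] {R' : V → V → Prop} (hR : AcyclicRel R)
    (h : GStep R R') : AcyclicRel R' ∧ level R' = level R := by
  cases h with
  | lc v =>
    exact acyclicRel_and_level_eq_of_cover hR (fun _ _ => level_lt_of_localComp hR)
      (fun _ _ => exists_localComp_of_rel hR v)
  | sl u v hne huv =>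
    exact acyclicRel_and_level_eq_of_cover hR (fun _ _ => level_lt_of_slideRel hR huv)
      (fun _ _ => exists_slideRel_of_rel hne huv)

end Operations

theorem exists_le_of_forall_mem_symmDiff {ι α : Type*} [Preorder α] {ℓ : ι → α} {A B : Set ι}
    {p : ι} (hp : p ∈ A → p ∈ B) (h : ∀ x ∈ A ∆ B, p ∈ A ∧ ℓ x ≤ ℓ p) :
    ∀ x ∈ A, ∃ y ∈ B, ℓ x ≤ ℓ y := by
  intro x hxA
  by_cases hxB : x ∈ B
  · exact ⟨x, hxB, le_rfl⟩
  · obtain ⟨hpA, hle⟩ := h x (Or.inl ⟨hxA, hxB⟩)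
    exact ⟨p, hp hpA, hle⟩

theorem nonempty_iff_and_sSup_image_eq {ι α : Type*} [ConditionallyCompleteLinearOrder α]
    {ℓ : ι → α} {A B : Set ι} {p : ι} (hp : p ∈ A ↔ p ∈ B)
    (h : ∀ x ∈ A ∆ B, p ∈ A ∧ ℓ x ≤ ℓ p) :
    (A.Nonempty ↔ B.Nonempty) ∧ sSup (ℓ '' A) = sSup (ℓ '' B) := by
  have hAB := exists_le_of_forall_mem_symmDiff hp.mp h
  have hBA := exists_le_of_forall_mem_symmDiff hp.mpr fun x hx =>
    (h x (symmDiff_comm B A ▸ hx)).imp_left hp.mp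
  refine ⟨⟨fun ⟨x, hx⟩ => ?_, fun ⟨x, hx⟩ => ?_⟩, ?_⟩
  · obtain ⟨y, hy, -⟩ := hAB x hx
    exact ⟨y, hy⟩
  · obtain ⟨y, hy, -⟩ := hBA x hx
    exact ⟨y, hy⟩
  refine csSup_eq_csSup_of_forall_exists_le ?_ ?_ <;> rintro _ ⟨x, hx, rfl⟩
  · obtain ⟨y, hy, hle⟩ := hAB x hx
    exact ⟨ℓ y, Set.mem_image_of_mem ℓ hy, hle⟩
  · obtain ⟨y, hy, hle⟩ := hBA x hx
    exact ⟨ℓ y, Set.mem_image_of_mem ℓ hy, hle⟩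

theorem Set.ncard_symmDiff_modEq {ι : Type*} [Finite ι] (A B : Set ι) :
    (A ∆ B).ncard ≡ A.ncard + B.ncard [MOD 2] := by
  have hA := Set.ncard_inter_add_ncard_sdiff_eq_ncard A B
  have hB := Set.ncard_inter_add_ncard_sdiff_eq_ncard B A
  rw [Set.inter_comm] at hB
  rw [Set.symmDiff_def, Set.ncard_union_eq disjoint_sdiff_sdiff, Nat.ModEq]
  omega

section Parity

variable {V : Type*} {R : V → V → Prop}

def oddVertices (R : V → V → Prop) : Set V := {v | Odd (outDeg R v)}

theorem outDeg_modEq_of_symmDiff [Finite V] {R' : V → V → Prop} {x y : V}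
    (h : {w | R' x w} = {w | R x w} ∆ {w | R y w}) :
    outDeg R' x ≡ outDeg R x + outDeg R y [MOD 2] := by
  simp only [outDeg, Nat.card_coe_set_eq, h]
  exact Set.ncard_symmDiff_modEq _ _

theorem setOf_localComp (R : V → V → Prop) (v x : V) :
    {w | localComp R v x w} = {w | R x w} ∆ {w | R x v ∧ R v w} := rfl

theorem setOf_slideRel (R : V → V → Prop) (u v x : V) :
    {w | slideRel R u v x w} = {w | R x w} ∆ {w | x = v ∧ R u w} := rfl

theorem outDeg_localComp_of_not_rel {v x : V} (hxv : ¬ R x v) :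
    outDeg (localComp R v) x = outDeg R x := by
  simp [outDeg, setOf_localComp, hxv, ← Set.bot_eq_empty, symmDiff_bot]

theorem outDeg_slideRel_of_ne {u v x : V} (hxv : x ≠ v) :
    outDeg (slideRel R u v) x = outDeg R x := by
  simp [outDeg, setOf_slideRel, hxv, ← Set.bot_eq_empty, symmDiff_bot]

theorem mem_oddVertices_localComp_self (hR : AcyclicRel R) (v : V) :
    v ∈ oddVertices (localComp R v) ↔ v ∈ oddVertices R := by
  simp only [oddVertices, Set.mem_ofPred_eq,
    outDeg_localComp_of_not_rel fun hv => hR v (.single hv)]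

theorem mem_oddVertices_slideRel_of_ne {u v : V} (hne : u ≠ v) :
    u ∈ oddVertices (slideRel R u v) ↔ u ∈ oddVertices R := by
  simp only [oddVertices, Set.mem_ofPred_eq, outDeg_slideRel_of_ne hne]

theorem odd_and_level_le_of_mem_symmDiff_localComp [Finite V] (hR : AcyclicRel R) {v x : V}
    (hx : x ∈ oddVertices R ∆ oddVertices (localComp R v)) :
    v ∈ oddVertices R ∧ level R x ≤ level R v := by
  by_cases hxv : R x v
  · have hmod : outDeg (localComp R v) x ≡ outDeg R x + outDeg R v [MOD 2] :=
      outDeg_modEq_of_symmDiff (by simp [setOf_localComp, hxv])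
    refine ⟨?_, (level_lt_level hR hxv).le⟩
    simp only [oddVertices, Set.mem_symmDiff, Set.mem_ofPred_eq, Nat.odd_iff, Nat.ModEq] at hx hmod ⊢
    omega
  · simp only [oddVertices, Set.mem_symmDiff, Set.mem_ofPred_eq, outDeg_localComp_of_not_rel hxv,
      and_not_self, or_self] at hx

theorem odd_and_level_le_of_mem_symmDiff_slideRel [Finite V] {u v x : V}
    (huv : ∀ w, R w u ↔ R w v) (hx : x ∈ oddVertices R ∆ oddVertices (slideRel R u v)) :
    u ∈ oddVertices R ∧ level R x ≤ level R u := by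
  by_cases hxv : x = v
  · subst hxv
    have hmod : outDeg (slideRel R u x) x ≡ outDeg R x + outDeg R u [MOD 2] :=
      outDeg_modEq_of_symmDiff (by simp [setOf_slideRel])
    refine ⟨?_, (level_eq_of_forall_rel_iff huv).ge⟩
    simp only [oddVertices, Set.mem_symmDiff, Set.mem_ofPred_eq, Nat.odd_iff, Nat.ModEq] at hx hmod ⊢
    omega
  · simp only [oddVertices, Set.mem_symmDiff, Set.mem_ofPred_eq, outDeg_slideRel_of_ne hxv,
      and_not_self, or_self] at hx

theorem GStep.exists_parity_pivot [Finite V] {R' : V → V → Prop} (hR : AcyclicRel R)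
    (h : GStep R R') : ∃ p, (p ∈ oddVertices R ↔ p ∈ oddVertices R') ∧
      ∀ x ∈ oddVertices R ∆ oddVertices R', p ∈ oddVertices R ∧ level R x ≤ level R p := by
  cases h with
  | lc v =>
    exact ⟨v, (mem_oddVertices_localComp_self hR v).symm,
      fun _ => odd_and_level_le_of_mem_symmDiff_localComp hR⟩
  | sl u v hne huv =>
    exact ⟨u, (mem_oddVertices_slideRel_of_ne hne).symm,
      fun _ => odd_and_level_le_of_mem_symmDiff_slideRel huv⟩

end Parity

section OddHeight

variable {V : Type*} {R R' : V → V → Prop}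

def oddLevels (R : V → V → Prop) : Set ℕ := {k | ∃ v ∈ levelSet R k, Odd (outDeg R v)}

open Classical in
noncomputable def oddHeight (R : V → V → Prop) : WithTop ℕ :=
  if ∃ v, Odd (outDeg R v) then ↑(sSup (oddLevels R)) else ⊤

theorem oddHeight_of_exists (h : ∃ v, Odd (outDeg R v)) : oddHeight R = ↑(sSup (oddLevels R)) :=
  if_pos h

theorem oddHeight_eq_top_iff : oddHeight R = ⊤ ↔ ¬ ∃ v, Odd (outDeg R v) := by
  by_cases h : ∃ v, Odd (outDeg R v) <;> simp [oddHeight, h]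

theorem oddLevels_eq_image_level [Finite V] (hR : AcyclicRel R) :
    oddLevels R = level R '' oddVertices R := by
  ext k
  simp only [oddLevels, mem_levelSet_iff hR, Set.mem_image, oddVertices, Set.mem_ofPred_eq]
  exact exists_congr fun v => and_comm

theorem EndPath.map {W : Type*} {S : W → W → Prop} (φ : R ↪r S) {k : ℕ} {v : V}
    (h : EndPath R k v) : EndPath S k (φ v) :=
  let ⟨f, hf, hv, harc⟩ := h
  ⟨φ ∘ f, φ.injective.comp hf, congrArg φ hv, fun i => φ.map_rel_iff.mpr (harc i)⟩

theorem oddHeight_relIso {W : Type*} {S : W → W → Prop} (e : R ≃r S) :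
    oddHeight S = oddHeight R := by
  have hpath : ∀ k v, EndPath S k (e v) ↔ EndPath R k v := fun k v =>
    ⟨fun h => by simpa using h.map e.symm.toRelEmbedding, fun h => h.map e.toRelEmbedding⟩
  have hdeg : ∀ v, outDeg S (e v) = outDeg R v := fun v =>
    Nat.card_congr (e.toEquiv.subtypeEquiv fun _ => e.map_rel_iff.symm).symm
  have hodd : (∃ w, Odd (outDeg S w)) ↔ ∃ v, Odd (outDeg R v) := by
    simp only [e.surjective.exists, hdeg]
  have hlevels : oddLevels S = oddLevels R := by
    ext k
    simp only [oddLevels, levelSet, Set.mem_ofPred_eq, e.surjective.exists, hpath, hdeg]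
  rw [oddHeight, oddHeight, hodd, hlevels]

theorem GStep.oddHeight_eq [Finite V] (hR : AcyclicRel R) (h : GStep R R') :
    oddHeight R' = oddHeight R := by
  classical
  obtain ⟨hR', hlevel⟩ := h.acyclicRel_and_level_eq hR
  obtain ⟨p, hp, hpivot⟩ := h.exists_parity_pivot hR
  obtain ⟨hne, hsup⟩ := nonempty_iff_and_sSup_image_eq hp hpivot
  rw [oddHeight, oddHeight, oddLevels_eq_image_level hR, oddLevels_eq_image_level hR', hlevel]
  exact if_congr hne.symm (congrArg _ hsup.symm) rfl

theorem oddHeight_eq_of_reflTransGen [Finite V] (hR : AcyclicRel R)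
    (h : ReflTransGen GStep R R') : AcyclicRel R' ∧ oddHeight R' = oddHeight R := by
  induction h with
  | refl => exact ⟨hR, rfl⟩
  | tail _ hstep ih =>
    exact ⟨(hstep.acyclicRel_and_level_eq ih.1).1, (hstep.oddHeight_eq ih.1).trans ih.2⟩

end OddHeight

theorem odd_height_invariant_general {V W : Type*} [Fintype V]
    (R : V → V → Prop) (S : W → W → Prop)
    (hR : AcyclicRel R) (h : BottEquivD R S) :
    ((∃ v : V, Odd (outDeg R v)) ↔ (∃ w : W, Odd (outDeg S w))) ∧
    ((∃ v : V, Odd (outDeg R v)) → (∃ w : W, Odd (outDeg S w)) →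
      sSup {k : ℕ | ∃ v ∈ levelSet R k, Odd (outDeg R v)} =
        sSup {k : ℕ | ∃ w ∈ levelSet S k, Odd (outDeg S w)}) := by
  obtain ⟨R', hsteps, e, he⟩ := h
  have hheight : oddHeight S = oddHeight R :=
    (oddHeight_relIso ⟨e, (he _ _).symm⟩).trans (oddHeight_eq_of_reflTransGen hR hsteps).2
  refine ⟨?_, fun hRodd hSodd => ?_⟩
  · rw [← not_iff_not, ← oddHeight_eq_top_iff, ← oddHeight_eq_top_iff, hheight]
  · exact WithTop.coe_injective <|
      (oddHeight_of_exists hRodd).symm.trans (hheight.symm.trans (oddHeight_of_exists hSodd))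

/-- Bott equivalent acyclic digraphs have the same odd height: one has a
vertex of odd out-degree iff the other does, and in that case the maximal `k`
such that `L_k` contains a vertex of odd out-degree is the same for both. -/
theorem odd_height_invariant {V W : Type*} [Fintype V] [Fintype W]
    (R : V → V → Prop) (S : W → W → Prop)
    (hR : AcyclicRel R) (hS : AcyclicRel S) (h : BottEquivD R S) :
    ((∃ v : V, Odd (outDeg R v)) ↔ (∃ w : W, Odd (outDeg S w))) ∧
    ((∃ v : V, Odd (outDeg R v)) → (∃ w : W, Odd (outDeg S w)) →
      sSup {k : ℕ | ∃ v ∈ levelSet R k, Odd (outDeg R v)} =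
        sSup {k : ℕ | ∃ w ∈ levelSet S k, Odd (outDeg S w)}) :=
  odd_height_invariant_general R S hR h
end
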